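/- For every y ≠ -1, (n+1)(P_{n+1}(y) + P_n(y))/(y + 1) = (P_{n+1}(y) - P_n(y))', where P_j denotes the j-th Legendre polynomial. -/

import Mathlib

open Polynomial

/-- The `n`-th Legendre polynomial via the Rodrigues formula. -/
noncomputable def legendre (n : ℕ) : Polynomial ℝ :=
  C ((2 ^ n * n.factorial : ℝ)⁻¹) * derivative^[n] ((X ^ 2 - 1) ^ n)

/-!
Adding the two classical recurrences `P'ₙ₊₁ = x P'ₙ + (n + 1) Pₙ` and
`(n + 1) Pₙ₊₁ = (x² - 1) P'ₙ + (n + 1) x Pₙ` gives the identity, because by the first one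
`(x + 1)(P'ₙ₊₁ - P'ₙ) = (x² - 1) P'ₙ + (n + 1)(x + 1) Pₙ`.
In Rodrigues form both follow from `((x² - 1)ⁿ⁺¹)' = 2(n + 1) x (x² - 1)ⁿ` and the Leibniz rule:
the first by differentiating this `n + 1` times, the second by comparing its `n`-th derivative
with the `(n + 1)`-st derivative of `(x² - 1) · (x² - 1)ⁿ`, where the terms involving the
`(n - 1)`-st derivative of `(x² - 1)ⁿ` cancel.
-/

namespace Polynomial

variable {R : Type*} [CommRing R]

-- For `k < 2` the truncated indices `k - 1`, `k - 2` only occur with coefficient `0`.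
theorem iterate_derivative_mul_X_sq_sub_one (k : ℕ) (p : R[X]) :
    derivative^[k] (p * (X ^ 2 - 1)) =
      derivative^[k] p * (X ^ 2 - 1) + (2 * k) • (derivative^[k - 1] p * X) +
        (k * (k - 1)) • derivative^[k - 2] p := by
  have hp : p * (X ^ 2 - 1) = p * X * X - p := by ring
  rw [hp, iterate_map_sub, iterate_derivative_mul_X, iterate_derivative_mul_X,
    iterate_derivative_mul_X, Nat.sub_sub]
  simp only [nsmul_eq_mul, Nat.cast_mul, Nat.cast_ofNat]
  ring

theorem derivative_X_sq_sub_one_pow_succ (n : ℕ) :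
    derivative ((X ^ 2 - 1) ^ (n + 1) : R[X]) =
      ((2 * (n + 1) : ℕ) : R[X]) * ((X ^ 2 - 1) ^ n * X) := by
  rw [derivative_pow, derivative_sub, derivative_X_pow, derivative_one]
  simp only [map_natCast]
  push_cast
  ring

theorem iterate_derivative_X_sq_sub_one_pow_succ_succ (n : ℕ) :
    derivative^[n + 2] ((X ^ 2 - 1) ^ (n + 1) : R[X]) =
      2 * ((n : R[X]) + 1) * (derivative^[n + 1] ((X ^ 2 - 1) ^ n) * X +
        ((n : R[X]) + 1) * derivative^[n] ((X ^ 2 - 1) ^ n)) := by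
  rw [Function.iterate_succ_apply, derivative_X_sq_sub_one_pow_succ,
    iterate_derivative_natCast_mul, iterate_derivative_mul_X, add_tsub_cancel_right, nsmul_eq_mul]
  push_cast
  ring

theorem iterate_derivative_X_sq_sub_one_pow_succ (n : ℕ) :
    derivative^[n + 1] ((X ^ 2 - 1) ^ (n + 1) : R[X]) =
      2 * (derivative^[n + 1] ((X ^ 2 - 1) ^ n) * (X ^ 2 - 1) +
        ((n : R[X]) + 1) * (derivative^[n] ((X ^ 2 - 1) ^ n) * X)) := by
  have leibniz := iterate_derivative_mul_X_sq_sub_one (n + 1) ((X ^ 2 - 1) ^ n : R[X])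
  have chain : derivative^[n + 1] ((X ^ 2 - 1) ^ (n + 1) : R[X]) =
      2 * ((n : R[X]) + 1) * (derivative^[n] ((X ^ 2 - 1) ^ n) * X +
        (n : R[X]) * derivative^[n - 1] ((X ^ 2 - 1) ^ n)) := by
    rw [Function.iterate_succ_apply, derivative_X_sq_sub_one_pow_succ,
      iterate_derivative_natCast_mul, iterate_derivative_mul_X, nsmul_eq_mul]
    push_cast
    ring
  rw [← pow_succ] at leibniz
  simp only [add_tsub_cancel_right, nsmul_eq_mul, Nat.cast_mul] at leibniz
  push_cast at leibniz
  linear_combination 2 * leibniz - chain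

end Polynomial

theorem C_inv_two_pow_mul_factorial (n : ℕ) :
    C ((2 ^ n * n.factorial : ℝ)⁻¹) =
      2 * ((n : ℝ[X]) + 1) * C ((2 ^ (n + 1) * (n + 1).factorial : ℝ)⁻¹) := by
  have h : ((2 ^ n * n.factorial : ℝ))⁻¹ =
      2 * ((n : ℝ) + 1) * (2 ^ (n + 1) * (n + 1).factorial : ℝ)⁻¹ := by
    rw [Nat.factorial_succ]
    push_cast
    field_simp
    ring
  rw [h, C_mul, C_mul, C_add, C_1, map_natCast, C_ofNat]

theorem derivative_legendre_succ (n : ℕ) :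
    derivative (legendre (n + 1)) =
      X * derivative (legendre n) + ((n : ℝ[X]) + 1) * legendre n := by
  unfold legendre
  rw [derivative_C_mul, derivative_C_mul, ← Function.iterate_succ_apply' derivative,
    ← Function.iterate_succ_apply' derivative, iterate_derivative_X_sq_sub_one_pow_succ_succ,
    C_inv_two_pow_mul_factorial n]
  ring

theorem mul_legendre_succ (n : ℕ) :
    ((n : ℝ[X]) + 1) * legendre (n + 1) =
      (X ^ 2 - 1) * derivative (legendre n) + ((n : ℝ[X]) + 1) * X * legendre n := by
  unfold legendre
  rw [derivative_C_mul, ← Function.iterate_succ_apply' derivative,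
    iterate_derivative_X_sq_sub_one_pow_succ, C_inv_two_pow_mul_factorial n]
  ring

theorem X_add_one_mul_derivative_legendre_succ_sub (n : ℕ) :
    (X + 1) * derivative (legendre (n + 1) - legendre n) =
      ((n : ℝ[X]) + 1) * (legendre (n + 1) + legendre n) := by
  rw [derivative_sub, derivative_legendre_succ]
  linear_combination -mul_legendre_succ n

theorem legendre_diff_quotient_neg_one (n : ℕ) (y : ℝ) (hy : y ≠ -1) :
    ((n : ℝ) + 1) * ((legendre (n + 1)).eval y + (legendre n).eval y) / (y + 1) =
      (derivative (legendre (n + 1) - legendre n)).eval y := by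
  have hy' : y + 1 ≠ 0 := fun h => hy (eq_neg_of_add_eq_zero_left h)
  have h := congrArg (eval y) (X_add_one_mul_derivative_legendre_succ_sub n)
  simp only [eval_mul, eval_add, eval_natCast, eval_one, eval_X] at h
  rw [div_eq_iff hy', ← h, mul_comm]
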